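/- Let G be the PEG over Σ = {a, b, c} with nonterminals S, A, B, C, axiom S, and rules S ← (&(Ac)) B C, A ← aAb / ε, B ← aB / a, C ← bCc / ε, where &e abbreviates !(!e). Then L(G) = {aⁿbⁿcⁿ | n ≥ 1}. -/
import Mathlib


/-! ### Parsing expression grammars -/

/-- Parsing expressions over nonterminals `N` and input alphabet `A`:
`ε`, terminals, nonterminals, sequence, prioritized choice, not-predicate. -/
inductive PExp (N A : Type) : Type where
  | eps : PExp N A
  | term : A → PExp N A
  | nt : N → PExp N A
  | seq : PExp N A → PExp N A → PExp N A
  | choice : PExp N A → PExp N A → PExp N A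
  | not : PExp N A → PExp N A

/-- A parsing expression grammar: one rule per nonterminal, and an axiom. -/
structure PEG (N A : Type) : Type where
  rule : N → PExp N A
  start : N

/-- Big-step relational semantics of the PEG parsing function `R`:
`Parses G e w r` means `R(e, w) = r`, where `r = none` encodes the failure `F`
and `r = some s` means that `e` consumed a prefix of `w` leaving the suffix `s`.
`R(e, w)` is defined iff `∃ r, Parses G e w r`. -/
inductive Parses {N A : Type} (G : PEG N A) : PExp N A → List A → Option (List A) → Prop where
  | eps (w : List A) : Parses G .eps w (some w)
  | term_ok (a : A) (s : List A) : Parses G (.term a) (a :: s) (some s)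
  | term_mismatch {a b : A} (s : List A) (h : a ≠ b) : Parses G (.term a) (b :: s) none
  | term_nil (a : A) : Parses G (.term a) [] none
  | nt {B : N} {w : List A} {r : Option (List A)} :
      Parses G (G.rule B) w r → Parses G (.nt B) w r
  | seq_ok {e₁ e₂ : PExp N A} {w w' : List A} {r : Option (List A)} :
      Parses G e₁ w (some w') → Parses G e₂ w' r → Parses G (.seq e₁ e₂) w r
  | seq_fail {e₁ e₂ : PExp N A} {w : List A} :
      Parses G e₁ w none → Parses G (.seq e₁ e₂) w none
  | choice_fst {e₁ e₂ : PExp N A} {w w' : List A} :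
      Parses G e₁ w (some w') → Parses G (.choice e₁ e₂) w (some w')
  | choice_snd {e₁ e₂ : PExp N A} {w : List A} {r : Option (List A)} :
      Parses G e₁ w none → Parses G e₂ w r → Parses G (.choice e₁ e₂) w r
  | not_succ {e : PExp N A} {w : List A} :
      Parses G e w none → Parses G (.not e) w (some w)
  | not_fail {e : PExp N A} {w w' : List A} :
      Parses G e w (some w') → Parses G (.not e) w none

/-- The language generated by a PEG: `L(G) = {w | R(S, w) = ε}`. -/
def PEG.Lang {N A : Type} (G : PEG N A) : Set (List A) :=
  {w | Parses G (.nt G.start) w (some [])}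

/-- A PEG is complete if `R(S, w)` is defined for every input `w`. -/
def PEG.Complete {N A : Type} (G : PEG N A) : Prop :=
  ∀ w : List A, ∃ r, Parses G (.nt G.start) w r

/-- The three-letter alphabet `{a, b, c}`. -/
inductive Abc : Type where
  | a | b | c
deriving DecidableEq

/-- The four nonterminals `S`, `A`, `B`, `C`. -/
inductive Nt14 : Type where
  | S | A | B | C
deriving DecidableEq

/-- The PEG with rules `S ← (&(Ac)) B C`, `A ← aAb / ε`, `B ← aB / a`,
`C ← bCc / ε`, where `&e = !(!e)`. -/
def G14 : PEG Nt14 Abc where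
  start := .S
  rule := fun n =>
    match n with
    | .S => .seq (.not (.not (.seq (.nt .A) (.term .c)))) (.seq (.nt .B) (.nt .C))
    | .A => .choice (.seq (.term .a) (.seq (.nt .A) (.term .b))) .eps
    | .B => .choice (.seq (.term .a) (.nt .B)) (.term .a)
    | .C => .choice (.seq (.term .b) (.seq (.nt .C) (.term .c))) .eps

theorem parses_det {N A : Type} {G : PEG N A} {e : PExp N A} {w : List A}
    {r₁ r₂ : Option (List A)} (h₁ : Parses G e w r₁) (h₂ : Parses G e w r₂) : r₁ = r₂ := by
  induction h₁ generalizing r₂ with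
  | eps w => cases h₂; rfl
  | term_ok a s => cases h₂ with
      | term_ok => rfl
      | term_mismatch _ h => exact absurd rfl h
  | term_mismatch s h => cases h₂ with
      | term_ok => exact absurd rfl h
      | term_mismatch => rfl
  | term_nil a => cases h₂; rfl
  | nt h ih => cases h₂ with | nt h₂ => exact ih h₂
  | seq_ok h₁' h₂' ih₁ ih₂ => cases h₂ with
      | seq_ok g₁ g₂ =>
          have := ih₁ g₁; injection this with h; subst h; exact ih₂ g₂
      | seq_fail g₁ => exact absurd (ih₁ g₁) (by simp)
  | seq_fail h ih => cases h₂ with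
      | seq_ok g₁ g₂ => exact absurd (ih g₁) (by simp)
      | seq_fail => rfl
  | choice_fst h ih => cases h₂ with
      | choice_fst g => exact ih g
      | choice_snd g _ => exact absurd (ih g) (by simp)
  | choice_snd h hs ih ihs => cases h₂ with
      | choice_fst g => exact absurd (ih g) (by simp)
      | choice_snd g g2 => exact ihs g2
  | not_succ h ih => cases h₂ with
      | not_succ => rfl
      | not_fail g => exact absurd (ih g) (by simp)
  | not_fail h ih => cases h₂ with
      | not_succ g => exact absurd (ih g) (by simp)
      | not_fail => rfl
lemma rep_cons {α : Type*} (x : α) (m : ℕ) (u : List α) :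
    List.replicate m x ++ x :: u = x :: (List.replicate m x ++ u) := by
  rw [← List.singleton_append, ← List.append_assoc, ← List.replicate_succ',
    List.replicate_succ, List.cons_append]

open Abc Nt14 PExp in
lemma A_sound_aux : ∀ n, ∀ w u : List Abc, w.length ≤ n →
    Parses G14 (.nt .A) w (some u) →
    ∃ m, w = List.replicate m a ++ List.replicate m b ++ u := by
  intro n
  induction n with
  | zero =>
      intro w u hl h
      cases h with | nt h =>
      have h : Parses G14 (.choice (.seq (.term a) (.seq (.nt A) (.term b))) .eps) w (some u) := h
      cases h with
      | choice_fst h =>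
          cases h with | seq_ok h1 h2 => cases h1; simp at hl
      | choice_snd _ h => cases h; exact ⟨0, by simp⟩
  | succ n ih =>
      intro w u hl h
      cases h with | nt h =>
      have h : Parses G14 (.choice (.seq (.term a) (.seq (.nt A) (.term b))) .eps) w (some u) := h
      cases h with
      | choice_fst h =>
          cases h with | seq_ok h1 h2 =>
          cases h1 with | term_ok _ w₁ =>
          cases h2 with | seq_ok hA hb =>
          rename_i u₁
          cases hb with | term_ok =>
          rename_i hb
          obtain ⟨m, rfl⟩ := ih _ _ (by simp at hl; omega) hA
          refine ⟨m + 1, ?_⟩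
          simp [List.replicate_succ, rep_cons]
      | choice_snd _ h => cases h; exact ⟨0, by simp⟩

open Abc Nt14 PExp in
lemma A_sound {w u : List Abc} (h : Parses G14 (.nt .A) w (some u)) :
    ∃ m, w = List.replicate m a ++ List.replicate m b ++ u :=
  A_sound_aux w.length w u le_rfl h

open Abc Nt14 PExp in
lemma C_sound_aux : ∀ n, ∀ w u : List Abc, w.length ≤ n →
    Parses G14 (.nt .C) w (some u) →
    ∃ m, w = List.replicate m b ++ List.replicate m c ++ u := by
  intro n
  induction n with
  | zero =>
      intro w u hl h
      cases h with | nt h =>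
      have h : Parses G14 (.choice (.seq (.term b) (.seq (.nt C) (.term c))) .eps) w (some u) := h
      cases h with
      | choice_fst h =>
          cases h with | seq_ok h1 h2 => cases h1; simp at hl
      | choice_snd _ h => cases h; exact ⟨0, by simp⟩
  | succ n ih =>
      intro w u hl h
      cases h with | nt h =>
      have h : Parses G14 (.choice (.seq (.term b) (.seq (.nt C) (.term c))) .eps) w (some u) := h
      cases h with
      | choice_fst h =>
          cases h with | seq_ok h1 h2 =>
          cases h1 with | term_ok _ w₁ =>
          cases h2 with | seq_ok hC hc =>
          rename_i u₁
          cases hc with | term_ok =>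
          rename_i hc
          obtain ⟨m, rfl⟩ := ih _ _ (by simp at hl; omega) hC
          refine ⟨m + 1, ?_⟩
          simp [List.replicate_succ, rep_cons]
      | choice_snd _ h => cases h; exact ⟨0, by simp⟩

open Abc Nt14 PExp in
lemma C_sound {w u : List Abc} (h : Parses G14 (.nt .C) w (some u)) :
    ∃ m, w = List.replicate m b ++ List.replicate m c ++ u :=
  C_sound_aux w.length w u le_rfl h

open Abc Nt14 PExp in
lemma B_sound_aux : ∀ n, ∀ w u : List Abc, w.length ≤ n →
    Parses G14 (.nt .B) w (some u) →
    ∃ p, 1 ≤ p ∧ w = List.replicate p a ++ u := by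
  intro n
  induction n with
  | zero =>
      intro w u hl h
      cases h with | nt h =>
      have h : Parses G14 (.choice (.seq (.term a) (.nt B)) (.term a)) w (some u) := h
      cases h with
      | choice_fst h => cases h with | seq_ok h1 h2 => cases h1; simp at hl
      | choice_snd _ h => cases h; simp at hl
  | succ n ih =>
      intro w u hl h
      cases h with | nt h =>
      have h : Parses G14 (.choice (.seq (.term a) (.nt B)) (.term a)) w (some u) := h
      cases h with
      | choice_fst h =>
          cases h with | seq_ok h1 h2 =>
          cases h1 with | term_ok _ w₁ =>
          obtain ⟨p, hp, rfl⟩ := ih _ _ (by simp at hl; omega) h2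
          exact ⟨p + 1, by omega, by simp [List.replicate_succ]⟩
      | choice_snd _ h =>
          cases h with | term_ok => exact ⟨1, le_rfl, by simp⟩

open Abc Nt14 PExp in
lemma B_sound {w u : List Abc} (h : Parses G14 (.nt .B) w (some u)) :
    ∃ p, 1 ≤ p ∧ w = List.replicate p a ++ u :=
  B_sound_aux w.length w u le_rfl h
open Abc Nt14 PExp in
lemma A_le : ∀ p q (s : List Abc), p ≤ q → (∀ t, s ≠ a :: t) →
    Parses G14 (.nt .A) (List.replicate p a ++ List.replicate q b ++ s)
      (some (List.replicate (q - p) b ++ s)) := by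
  intro p
  induction p with
  | zero =>
      intro q s _ hs
      have hfail : Parses G14 (.term a) (List.replicate q b ++ s) none := by
        cases q with
        | zero =>
            cases s with
            | nil => exact Parses.term_nil _
            | cons h t =>
                simp only [List.replicate, List.nil_append]
                exact Parses.term_mismatch _ (fun he => hs t (by rw [he]))
        | succ q =>
            simp only [List.replicate_succ, List.cons_append]
            exact Parses.term_mismatch _ (by decide)
      apply Parses.nt
      show Parses G14 (.choice (.seq (.term a) (.seq (.nt A) (.term b))) .eps) _ _
      simpa using Parses.choice_snd (Parses.seq_fail hfail) (Parses.eps _)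
  | succ p ih =>
      intro q s hpq hs
      have h1 := ih q s (by omega) hs
      have hq : q - p = (q - (p + 1)) + 1 := by omega
      rw [hq, List.replicate_succ, List.cons_append] at h1
      apply Parses.nt
      show Parses G14 (.choice (.seq (.term a) (.seq (.nt A) (.term b))) .eps) _ _
      rw [List.replicate_succ, List.cons_append, List.cons_append]
      exact Parses.choice_fst (Parses.seq_ok (Parses.term_ok _ _)
        (Parses.seq_ok h1 (Parses.term_ok _ _)))

open Abc Nt14 PExp in
lemma A_gt : ∀ p q (s : List Abc), q < p → (∀ t, s ≠ a :: t) → (∀ t, s ≠ b :: t) →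
    Parses G14 (.nt .A) (List.replicate p a ++ List.replicate q b ++ s)
      (some (List.replicate p a ++ List.replicate q b ++ s)) := by
  intro p
  induction p with
  | zero => intro q s h; omega
  | succ p ih =>
      intro q s hqp hsa hsb
      -- inner evaluation of A on replicate p a ++ replicate q b ++ s
      have hinner : ∃ u, Parses G14 (.nt A) (List.replicate p a ++ List.replicate q b ++ s) (some u) ∧
          Parses G14 (.term b) u none := by
        rcases Nat.lt_or_ge q p with hlt | hge
        · refine ⟨_, ih q s hlt hsa hsb, ?_⟩
          have hp1 : 1 ≤ p := by omega
          obtain ⟨p', rfl⟩ : ∃ p', p = p' + 1 := ⟨p - 1, by omega⟩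
          simp only [List.replicate_succ, List.cons_append]
          exact Parses.term_mismatch _ (by decide)
        · have hq : q = p := by omega
          subst hq
          have := A_le q q s le_rfl hsa
          simp only [Nat.sub_self, List.replicate_zero, List.nil_append] at this
          refine ⟨s, this, ?_⟩
          cases s with
          | nil => exact Parses.term_nil _
          | cons h t => exact Parses.term_mismatch _ (fun he => hsb t (by rw [he]))
      obtain ⟨u, hA, hb⟩ := hinner
      apply Parses.nt
      show Parses G14 (.choice (.seq (.term a) (.seq (.nt A) (.term b))) .eps) _ _
      refine Parses.choice_snd ?_ (Parses.eps _)
      rw [List.replicate_succ, List.cons_append, List.cons_append]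
      exact Parses.seq_ok (Parses.term_ok _ _) (Parses.seq_ok hA hb)

open Abc Nt14 PExp in
lemma B_parse : ∀ p (v : List Abc), 1 ≤ p → (∀ t, v ≠ a :: t) →
    Parses G14 (.nt .B) (List.replicate p a ++ v) (some v) := by
  intro p
  induction p with
  | zero => intro v h; omega
  | succ p ih =>
      intro v _ hv
      apply Parses.nt
      show Parses G14 (.choice (.seq (.term a) (.nt B)) (.term a)) _ _
      rw [List.replicate_succ, List.cons_append]
      rcases Nat.eq_zero_or_pos p with rfl | hp
      · -- B on v fails
        have hfa : Parses G14 (.term a) v none := by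
          cases v with
          | nil => exact Parses.term_nil _
          | cons h t => exact Parses.term_mismatch _ (fun he => hv t (by rw [he]))
        have hBfail : Parses G14 (.nt B) v none := by
          apply Parses.nt
          show Parses G14 (.choice (.seq (.term a) (.nt B)) (.term a)) _ _
          exact Parses.choice_snd (Parses.seq_fail hfa) hfa
        simp only [List.replicate_zero, List.nil_append]
        exact Parses.choice_snd (Parses.seq_ok (Parses.term_ok _ _) hBfail)
          (Parses.term_ok _ _)
      · exact Parses.choice_fst (Parses.seq_ok (Parses.term_ok _ _) (ih v hp hv))

open Abc Nt14 PExp in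
lemma C_exact : ∀ n (s : List Abc), (∀ t, s ≠ b :: t) →
    Parses G14 (.nt .C) (List.replicate n b ++ List.replicate n c ++ s) (some s) := by
  intro n
  induction n with
  | zero =>
      intro s hs
      have hfail : Parses G14 (.term b) s none := by
        cases s with
        | nil => exact Parses.term_nil _
        | cons h t => exact Parses.term_mismatch _ (fun he => hs t (by rw [he]))
      apply Parses.nt
      show Parses G14 (.choice (.seq (.term b) (.seq (.nt C) (.term c))) .eps) _ _
      simpa using Parses.choice_snd (Parses.seq_fail hfail) (Parses.eps _)
  | succ n ih =>
      intro s hs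
      have h1 := ih (c :: s) (by intro t h; cases h)
      apply Parses.nt
      show Parses G14 (.choice (.seq (.term b) (.seq (.nt C) (.term c))) .eps) _ _
      rw [List.replicate_succ, List.cons_append, List.cons_append]
      apply Parses.choice_fst
      refine Parses.seq_ok (Parses.term_ok _ _) (Parses.seq_ok ?_ (Parses.term_ok _ _))
      rw [List.replicate_succ' (n := n) (a := c)]
      simpa using h1
lemma rep_ne_head {x y : Abc} (h : y ≠ x) : ∀ q (t : List Abc), List.replicate q x ≠ y :: t := by
  intro q t he
  cases q with
  | zero => simp at he
  | succ q =>
      rw [List.replicate_succ] at he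
      exact h (by injection he with h1 _; exact h1.symm)

open Abc Nt14 PExp in
theorem g14_lang' :
    G14.Lang =
      {w | ∃ n : ℕ, 1 ≤ n ∧
        w = List.replicate n Abc.a ++ List.replicate n Abc.b ++
            List.replicate n Abc.c} := by
  ext w
  simp only [PEG.Lang, Set.mem_setOf_eq]
  constructor
  · intro h
    have h : Parses G14 (.nt S) w (some []) := h
    cases h with | nt h =>
    have h : Parses G14 (.seq (.not (.not (.seq (.nt A) (.term c))))
        (.seq (.nt B) (.nt C))) w (some []) := h
    cases h with | seq_ok h1 h2 =>
    cases h1 with | not_succ h1 =>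
    cases h1 with | not_fail hAc =>
    cases h2 with | seq_ok hB hC =>
    obtain ⟨p, hp, rfl⟩ := B_sound hB
    obtain ⟨q, hq⟩ := C_sound hC
    rw [List.append_nil] at hq
    subst hq
    rw [← List.append_assoc] at hAc ⊢
    rcases lt_trichotomy p q with hlt | heq | hgt
    · exfalso
      have hA' := A_le p q (List.replicate q c) hlt.le (rep_ne_head (x := c) (y := a) (by decide) _)
      have hcfail : Parses G14 (.term c)
          (List.replicate (q - p) b ++ List.replicate q c) none := by
        obtain ⟨d, hd⟩ : ∃ d, q - p = d + 1 := ⟨q - p - 1, by omega⟩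
        rw [hd, List.replicate_succ, List.cons_append]
        exact Parses.term_mismatch _ (by decide)
      have := parses_det hAc (Parses.seq_ok hA' hcfail)
      simp at this
    · exact ⟨p, hp, by rw [heq]⟩
    · exfalso
      have hA' := A_gt p q (List.replicate q c) hgt (rep_ne_head (x := c) (y := a) (by decide) _)
        (rep_ne_head (x := c) (y := b) (by decide) _)
      have hcfail : Parses G14 (.term c)
          (List.replicate p a ++ List.replicate q b ++ List.replicate q c) none := by
        obtain ⟨d, hd⟩ : ∃ d, p = d + 1 := ⟨p - 1, by omega⟩
        rw [hd, List.replicate_succ, List.cons_append, List.cons_append]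
        exact Parses.term_mismatch _ (by decide)
      have := parses_det hAc (Parses.seq_ok hA' hcfail)
      simp at this
  · rintro ⟨n, hn, rfl⟩
    obtain ⟨m, rfl⟩ : ∃ m, n = m + 1 := ⟨n - 1, by omega⟩
    show Parses G14 (.nt S) _ (some [])
    apply Parses.nt
    show Parses G14 (.seq (.not (.not (.seq (.nt A) (.term c))))
        (.seq (.nt B) (.nt C))) _ _
    have hA := A_le (m + 1) (m + 1) (List.replicate (m + 1) c) le_rfl
      (rep_ne_head (x := c) (y := a) (by decide) _)
    rw [Nat.sub_self, List.replicate_zero, List.nil_append] at hA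
    have hc : Parses G14 (.term c) (List.replicate (m + 1) c)
        (some (List.replicate m c)) := by
      rw [List.replicate_succ]
      exact Parses.term_ok _ _
    have hAc := Parses.seq_ok hA hc
    refine Parses.seq_ok (Parses.not_succ (Parses.not_fail hAc)) ?_
    have hB := B_parse (m + 1) (List.replicate (m + 1) b ++ List.replicate (m + 1) c)
      (by omega) (by
        rw [List.replicate_succ, List.cons_append]
        intro t he; cases he)
    rw [← List.append_assoc] at hB
    have hC := C_exact (m + 1) [] (fun t he => by cases he)
    rw [List.append_nil] at hC
    exact Parses.seq_ok hB hC

/-- The PEG `G14` generates `{aⁿbⁿcⁿ | n ≥ 1}`. -/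
theorem g14_lang :
    G14.Lang =
      {w | ∃ n : ℕ, 1 ≤ n ∧
        w = List.replicate n Abc.a ++ List.replicate n Abc.b ++
            List.replicate n Abc.c} := g14_lang'
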